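/- arXiv:0908.2292 — 9 statements merged into one kernel-verified Lean document; each statement's English description precedes it below -/
import Mathlib

section
/- Let b₀, b₁, b₂ : ℝ → ℝ be differentiable with b₀(t) > 0 and b₂(t) > 0 for all t, and let c₀, c₁, c₂ be real constants with c₀ > 0 and c₂ > 0. Set D(t) = √(b₀(t) b₂(t) / (c₀ c₂)) and α(t) = (b₂(t) c₀ / (b₀(t) c₂))^{1/4}. Then the transformed coefficients b'₀ = α² b₀, b'₁ = b₁ + 2 α'/α, b'₂ = α⁻² b₂ satisfy b'ᵢ(t) = D(t) cᵢ for i = 0, 1, 2 and all t if and only if b₁(t) + (1/2)(b₂'(t)/b₂(t) − b₀'(t)/b₀(t)) = c₁ √(b₀(t) b₂(t)/(c₀ c₂)) for all t. (In fact b'₀ = D c₀ and b'₂ = D c₂ hold automatically, and the displayed condition is equivalent to b'₁ = D c₁.) -/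
/-! The transformation `diag(α, α⁻¹)` with `α⁴ = b₂c₀/(b₀c₂)` balances `b₀` and `b₂`: both
`α²b₀` and `α⁻²b₂` equal `√(b₀b₂/(c₀c₂))` times `c₀`, resp. `c₂`, by a computation of square
roots. Only the middle coefficient is constrained, and there `2α'/α` is twice the logarithmic
derivative of `α`, i.e. `(1/2)(b₂'/b₂ − b₀'/b₀)`. -/

open Real

lemma logDeriv_fun_rpow_const {f : ℝ → ℝ} {x : ℝ} (p : ℝ) (hf : DifferentiableAt ℝ f x)
    (hfx : 0 < f x) : logDeriv (fun y => f y ^ p) x = p * logDeriv f x := by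
  rw [logDeriv_apply, (hf.hasDerivAt.rpow_const (.inl hfx.ne')).deriv, logDeriv_apply,
    rpow_sub_one hfx.ne']
  have : f x ^ p ≠ 0 := (rpow_pos_of_pos hfx p).ne'
  field_simp

lemma rpow_one_div_four_sq {x : ℝ} (hx : 0 ≤ x) : (x ^ ((1 : ℝ) / 4)) ^ 2 = √x := by
  rw [← rpow_natCast, ← rpow_mul hx, sqrt_eq_rpow]
  norm_num

lemma sqrt_mul_eq_sqrt_mul_of_mul_sq_eq {x y a b : ℝ} (ha : 0 ≤ a) (hb : 0 ≤ b)
    (h : x * a ^ 2 = y * b ^ 2) : √x * a = √y * b := by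
  rw [← sqrt_sq ha, ← sqrt_sq hb, ← sqrt_mul' x (sq_nonneg a), ← sqrt_mul' y (sq_nonneg b), h]

section Balancing

variable {b₀ b₂ c₀ c₂ : ℝ}

lemma balancing_sq_mul_left (hb₀ : 0 < b₀) (hb₂ : 0 < b₂) (hc₀ : 0 < c₀) (hc₂ : 0 < c₂) :
    ((b₂ * c₀ / (b₀ * c₂)) ^ ((1 : ℝ) / 4)) ^ 2 * b₀ = √(b₀ * b₂ / (c₀ * c₂)) * c₀ := by
  rw [rpow_one_div_four_sq (by positivity)]
  refine sqrt_mul_eq_sqrt_mul_of_mul_sq_eq hb₀.le hc₀.le ?_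
  field_simp

lemma balancing_inv_sq_mul_right (hb₀ : 0 < b₀) (hb₂ : 0 < b₂) (hc₀ : 0 < c₀) (hc₂ : 0 < c₂) :
    ((b₂ * c₀ / (b₀ * c₂)) ^ ((1 : ℝ) / 4))⁻¹ ^ 2 * b₂ = √(b₀ * b₂ / (c₀ * c₂)) * c₂ := by
  rw [inv_pow, rpow_one_div_four_sq (by positivity), ← sqrt_inv]
  refine sqrt_mul_eq_sqrt_mul_of_mul_sq_eq hb₂.le hc₂.le ?_
  field_simp

end Balancing

lemma logDeriv_balancing {b₀ b₂ : ℝ → ℝ} {c₀ c₂ t : ℝ} (p : ℝ) (hb₀ : DifferentiableAt ℝ b₀ t)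
    (hb₂ : DifferentiableAt ℝ b₂ t) (hb₀t : 0 < b₀ t) (hb₂t : 0 < b₂ t) (hc₀ : 0 < c₀)
    (hc₂ : 0 < c₂) :
    logDeriv (fun s => (b₂ s * c₀ / (b₀ s * c₂)) ^ p) t = p * (logDeriv b₂ t - logDeriv b₀ t) := by
  have hdiff : DifferentiableAt ℝ (fun s => b₂ s * c₀ / (b₀ s * c₂)) t :=
    (hb₂.mul_const c₀).fun_div (hb₀.mul_const c₂) (by positivity)
  rw [logDeriv_fun_rpow_const p hdiff (by positivity),
    logDeriv_div t (by positivity) (by positivity) (hb₂.mul_const c₀) (hb₀.mul_const c₂),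
    logDeriv_mul_const t _ hc₀.ne', logDeriv_mul_const t _ hc₂.ne']

theorem diag_transform_integrability_iff_general
    (b₀ b₁ b₂ : ℝ → ℝ)
    (hb₀ : Differentiable ℝ b₀) (hb₂ : Differentiable ℝ b₂)
    (hb₀pos : ∀ t, 0 < b₀ t) (hb₂pos : ∀ t, 0 < b₂ t)
    (c₀ c₁ c₂ : ℝ) (hc₀ : 0 < c₀) (hc₂ : 0 < c₂)
    (D α : ℝ → ℝ)
    (hD : ∀ t, D t = Real.sqrt (b₀ t * b₂ t / (c₀ * c₂)))
    (hα : ∀ t, α t = (b₂ t * c₀ / (b₀ t * c₂)) ^ ((1 : ℝ) / 4)) :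
    (∀ t, (α t) ^ 2 * b₀ t = D t * c₀ ∧
        b₁ t + 2 * deriv α t / α t = D t * c₁ ∧
        (α t)⁻¹ ^ 2 * b₂ t = D t * c₂) ↔
      (∀ t, b₁ t + (1 / 2) * (deriv b₂ t / b₂ t - deriv b₀ t / b₀ t) =
        c₁ * Real.sqrt (b₀ t * b₂ t / (c₀ * c₂))) := by
  have hlog : ∀ t, 2 * deriv α t / α t = (1 / 2) * (deriv b₂ t / b₂ t - deriv b₀ t / b₀ t) := by
    intro t
    rw [mul_div_assoc, ← logDeriv_apply, funext hα,
      logDeriv_balancing _ (hb₀ t) (hb₂ t) (hb₀pos t) (hb₂pos t) hc₀ hc₂, logDeriv_apply,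
      logDeriv_apply]
    ring
  have hleft : ∀ t, α t ^ 2 * b₀ t = D t * c₀ := fun t => by
    rw [hα, hD, balancing_sq_mul_left (hb₀pos t) (hb₂pos t) hc₀ hc₂]
  have hright : ∀ t, (α t)⁻¹ ^ 2 * b₂ t = D t * c₂ := fun t => by
    rw [hα, hD, balancing_inv_sq_mul_right (hb₀pos t) (hb₂pos t) hc₀ hc₂]
  simp only [hleft, hright, hlog, hD, true_and, and_true, mul_comm c₁]

/-- With `b₀, b₂ > 0`, `c₀, c₂ > 0`, `D = √(b₀ b₂/(c₀ c₂))` and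
`α = (b₂ c₀/(b₀ c₂))^{1/4}`, the transformed coefficients `b'₀ = α² b₀`,
`b'₁ = b₁ + 2α'/α`, `b'₂ = α⁻² b₂` satisfy `b'ᵢ = D cᵢ` (i = 0,1,2) for all `t`
iff the integrability condition
`b₁ + (1/2)(b₂'/b₂ − b₀'/b₀) = c₁ √(b₀ b₂/(c₀ c₂))` holds for all `t`. -/
theorem diag_transform_integrability_iff
    (b₀ b₁ b₂ : ℝ → ℝ)
    (hb₀ : Differentiable ℝ b₀) (hb₁ : Differentiable ℝ b₁) (hb₂ : Differentiable ℝ b₂)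
    (hb₀pos : ∀ t, 0 < b₀ t) (hb₂pos : ∀ t, 0 < b₂ t)
    (c₀ c₁ c₂ : ℝ) (hc₀ : 0 < c₀) (hc₂ : 0 < c₂)
    (D α : ℝ → ℝ)
    (hD : ∀ t, D t = Real.sqrt (b₀ t * b₂ t / (c₀ * c₂)))
    (hα : ∀ t, α t = (b₂ t * c₀ / (b₀ t * c₂)) ^ ((1 : ℝ) / 4)) :
    (∀ t, (α t) ^ 2 * b₀ t = D t * c₀ ∧
        b₁ t + 2 * deriv α t / α t = D t * c₁ ∧
        (α t)⁻¹ ^ 2 * b₂ t = D t * c₂) ↔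
      (∀ t, b₁ t + (1 / 2) * (deriv b₂ t / b₂ t - deriv b₀ t / b₀ t) =
        c₁ * Real.sqrt (b₀ t * b₂ t / (c₀ * c₂))) :=
  diag_transform_integrability_iff_general b₀ b₁ b₂ hb₀ hb₂ hb₀pos hb₂pos c₀ c₁ c₂ hc₀ hc₂ D α hD hα
end

section
/- Let b₀, b₁, b₂ : ℝ → ℝ be differentiable with b₀(t) > 0, b₂(t) > 0, and let c₀, c₁, c₂ be real constants with c₀ > 0, c₂ > 0. Suppose there exist a differentiable function α : ℝ → (0, ∞) and a function D : ℝ → ℝ such that α(t)² b₀(t) = D(t) c₀, b₁(t) + 2 α'(t)/α(t) = D(t) c₁, and α(t)⁻² b₂(t) = D(t) c₂ for all t. Then necessarily D(t)² c₀ c₂ = b₀(t) b₂(t), the integrability condition b₁ + (1/2)(b₂'/b₂ − b₀'/b₀) = c₁ √(b₀ b₂/(c₀ c₂)) holds for all t, and the transformation is uniquely determined: α(t) = (b₂(t) c₀ / (b₀(t) c₂))^{1/4}. -/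
/-!
The two scaling equations `α² b₀ = D c₀` and `α⁻² b₂ = D c₂` determine everything: their
product gives `D² c₀ c₂ = b₀ b₂`, and their quotient gives `b₂ = (c₂/c₀) α⁴ b₀`, hence
`α = (b₂ c₀/(b₀ c₂))^{1/4}`. Taking logarithmic derivatives of `b₂ = (c₂/c₀) α⁴ b₀` gives
`(b₂'/b₂ − b₀'/b₀)/2 = 2α'/α`, which turns the middle equation `b₁ + 2α'/α = D c₁` into the
integrability condition.
-/

theorem logDeriv_const_mul_pow_mul {𝕜 𝕜' : Type*} [NontriviallyNormedField 𝕜]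
    [NontriviallyNormedField 𝕜'] [NormedAlgebra 𝕜 𝕜'] {f g : 𝕜 → 𝕜'} {x : 𝕜} {k : 𝕜'}
    (hk : k ≠ 0) (hfx : f x ≠ 0) (hgx : g x ≠ 0)
    (hf : DifferentiableAt 𝕜 f x) (hg : DifferentiableAt 𝕜 g x) (n : ℕ) :
    logDeriv (fun t => k * (f t ^ n * g t)) x = n * logDeriv f x + logDeriv g x := by
  rw [logDeriv_const_mul x k hk,
    logDeriv_mul (f := (f · ^ n)) x (pow_ne_zero n hfx) hgx (hf.pow n) hg, logDeriv_fun_pow hf]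

namespace DiagTransform

variable {a x y d c₀ c₂ : ℝ}

theorem sq_mul_mul_eq (ha : a ≠ 0) (h0 : a ^ 2 * x = d * c₀) (h2 : a⁻¹ ^ 2 * y = d * c₂) :
    d ^ 2 * (c₀ * c₂) = x * y := by
  field_simp at h2
  linear_combination (-(d * c₂)) * h0 - x * h2

theorem eq_const_mul_pow_four_mul (ha : a ≠ 0) (hc₀ : c₀ ≠ 0) (h0 : a ^ 2 * x = d * c₀)
    (h2 : a⁻¹ ^ 2 * y = d * c₂) :
    y = c₂ / c₀ * (a ^ 4 * x) := by
  field_simp at h2 ⊢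
  linear_combination (-(a ^ 2 * c₂)) * h0 + c₀ * h2

theorem eq_sqrt (ha : a ≠ 0) (hx : 0 ≤ x) (hc₀ : 0 < c₀) (hc₂ : c₂ ≠ 0)
    (h0 : a ^ 2 * x = d * c₀) (h2 : a⁻¹ ^ 2 * y = d * c₂) :
    d = Real.sqrt (x * y / (c₀ * c₂)) := by
  have hd : 0 ≤ d := nonneg_of_mul_nonneg_left (h0 ▸ by positivity) hc₀
  rw [← sq_mul_mul_eq ha h0 h2, mul_div_cancel_right₀ _ (mul_ne_zero hc₀.ne' hc₂),
    Real.sqrt_sq hd]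

theorem eq_rpow_one_div_four (ha : 0 < a) (hx : x ≠ 0) (hc₀ : c₀ ≠ 0) (hc₂ : c₂ ≠ 0)
    (h0 : a ^ 2 * x = d * c₀) (h2 : a⁻¹ ^ 2 * y = d * c₂) :
    a = (y * c₀ / (x * c₂)) ^ ((1 : ℝ) / 4) := by
  have hratio : y * c₀ / (x * c₂) = a ^ 4 := by
    rw [eq_const_mul_pow_four_mul ha.ne' hc₀ h0 h2]
    field_simp
  rw [hratio, one_div]
  exact_mod_cast (Real.pow_rpow_inv_natCast ha.le four_ne_zero).symm

end DiagTransform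

open DiagTransform in
theorem diag_transform_necessary_conditions_general
    (b₀ b₁ b₂ : ℝ → ℝ)
    (hb₀ : Differentiable ℝ b₀)
    (hb₀pos : ∀ t, 0 < b₀ t)
    (c₀ c₁ c₂ : ℝ) (hc₀ : 0 < c₀) (hc₂ : 0 < c₂)
    (α D : ℝ → ℝ) (hαpos : ∀ t, 0 < α t) (hα : Differentiable ℝ α)
    (h0 : ∀ t, (α t) ^ 2 * b₀ t = D t * c₀)
    (h1 : ∀ t, b₁ t + 2 * deriv α t / α t = D t * c₁)
    (h2 : ∀ t, (α t)⁻¹ ^ 2 * b₂ t = D t * c₂) :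
    (∀ t, (D t) ^ 2 * (c₀ * c₂) = b₀ t * b₂ t) ∧
      (∀ t, b₁ t + (1 / 2) * (deriv b₂ t / b₂ t - deriv b₀ t / b₀ t) =
        c₁ * Real.sqrt (b₀ t * b₂ t / (c₀ * c₂))) ∧
      (∀ t, α t = (b₂ t * c₀ / (b₀ t * c₂)) ^ ((1 : ℝ) / 4)) := by
  have hb₂ : b₂ = fun t => c₂ / c₀ * (α t ^ 4 * b₀ t) :=
    funext fun t => eq_const_mul_pow_four_mul (hαpos t).ne' hc₀.ne' (h0 t) (h2 t)
  refine ⟨fun t => sq_mul_mul_eq (hαpos t).ne' (h0 t) (h2 t), fun t => ?_,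
    fun t => eq_rpow_one_div_four (hαpos t) (hb₀pos t).ne' hc₀.ne' hc₂.ne' (h0 t) (h2 t)⟩
  have hlog : logDeriv b₂ t = 4 * logDeriv α t + logDeriv b₀ t := by
    rw [hb₂]
    exact_mod_cast logDeriv_const_mul_pow_mul (div_ne_zero hc₂.ne' hc₀.ne') (hαpos t).ne'
      (hb₀pos t).ne' (hα t) (hb₀ t) 4
  rw [← eq_sqrt (hαpos t).ne' (hb₀pos t).le hc₀ hc₂.ne' (h0 t) (h2 t), mul_comm c₁, ← h1 t]
  simp only [logDeriv_apply] at hlog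
  rw [hlog]
  ring

/-- If a positive differentiable `α` and a function `D` transform the
coefficients `(b₀, b₁, b₂)` (with `b₀, b₂ > 0`) into `D·(c₀, c₁, c₂)` (with `c₀, c₂ > 0`),
i.e. `α² b₀ = D c₀`, `b₁ + 2α'/α = D c₁`, `α⁻² b₂ = D c₂`, then necessarily
`D² c₀ c₂ = b₀ b₂`, the integrability condition
`b₁ + (1/2)(b₂'/b₂ − b₀'/b₀) = c₁ √(b₀ b₂/(c₀ c₂))` holds, and the transformation is
uniquely determined: `α = (b₂ c₀/(b₀ c₂))^{1/4}`. -/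
theorem diag_transform_necessary_conditions
    (b₀ b₁ b₂ : ℝ → ℝ)
    (hb₀ : Differentiable ℝ b₀) (hb₁ : Differentiable ℝ b₁) (hb₂ : Differentiable ℝ b₂)
    (hb₀pos : ∀ t, 0 < b₀ t) (hb₂pos : ∀ t, 0 < b₂ t)
    (c₀ c₁ c₂ : ℝ) (hc₀ : 0 < c₀) (hc₂ : 0 < c₂)
    (α D : ℝ → ℝ) (hαpos : ∀ t, 0 < α t) (hα : Differentiable ℝ α)
    (h0 : ∀ t, (α t) ^ 2 * b₀ t = D t * c₀)
    (h1 : ∀ t, b₁ t + 2 * deriv α t / α t = D t * c₁)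
    (h2 : ∀ t, (α t)⁻¹ ^ 2 * b₂ t = D t * c₂) :
    (∀ t, (D t) ^ 2 * (c₀ * c₂) = b₀ t * b₂ t) ∧
      (∀ t, b₁ t + (1 / 2) * (deriv b₂ t / b₂ t - deriv b₀ t / b₀ t) =
        c₁ * Real.sqrt (b₀ t * b₂ t / (c₀ * c₂))) ∧
      (∀ t, α t = (b₂ t * c₀ / (b₀ t * c₂)) ^ ((1 : ℝ) / 4)) :=
  diag_transform_necessary_conditions_general b₀ b₁ b₂ hb₀ hb₀pos c₀ c₁ c₂ hc₀ hc₂ α D hαpos hα h0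
    h1 h2
end

section
/- Let b₀, b₁, b₂ : ℝ → ℝ be differentiable with b₀(t) > 0, b₂(t) > 0, and let c₀, c₁, c₂ be constants with c₀ > 0, c₂ > 0, such that the integrability condition √(c₀ c₂/(b₀(t) b₂(t))) · [b₁(t) + (1/2)(b₂'(t)/b₂(t) − b₀'(t)/b₀(t))] = c₁ holds for all t. Set α(t) = (b₂(t) c₀/(b₀(t) c₂))^{1/4} and D(t) = √(b₀(t) b₂(t)/(c₀ c₂)). Then for every differentiable solution ξ : ℝ → ℝ² of ξ'(t) = [[b₁(t)/2, b₀(t)], [−b₂(t), −b₁(t)/2]] ξ(t), the transformed curve ξ̃(t) = diag(α(t), α(t)⁻¹) ξ(t) satisfies ξ̃'(t) = D(t) [[c₁/2, c₀], [−c₂, −c₁/2]] ξ̃(t) for all t. -/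
/-! The diagonal gauge `diag(α, α⁻¹)` turns `x' = a x + b p`, `p' = -c x - a p` into a system
of the same shape with coefficients `a + α'/α`, `α² b`, `c/α²`. With `α = (b₂ c₀/(b₀ c₂))^{1/4}`
one has `α'/α = ¼ (b₂'/b₂ - b₀'/b₀)`, and the three new coefficients become `D c₁/2`, `D c₀`,
`D c₂`: the first by the integrability condition, the other two because both sides are positive
with equal squares. -/

section DiagonalScaling

variable {α x p : ℝ → ℝ} {k a b c t : ℝ}

theorem HasDerivAt.diag_scale_fst (hα : HasDerivAt α (k * α t) t)
    (hx : HasDerivAt x (a * x t + b * p t) t) (hα0 : α t ≠ 0) :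
    HasDerivAt (fun s => α s * x s)
      ((k + a) * (α t * x t) + α t ^ 2 * b * ((α t)⁻¹ * p t)) t :=
  (hα.mul hx).congr_deriv (by field_simp; ring)

theorem HasDerivAt.diag_scale_snd (hα : HasDerivAt α (k * α t) t)
    (hp : HasDerivAt p (-c * x t - a * p t) t) (hα0 : α t ≠ 0) :
    HasDerivAt (fun s => (α s)⁻¹ * p s)
      (-(c / α t ^ 2) * (α t * x t) - (a + k) * ((α t)⁻¹ * p t)) t :=
  ((hα.inv hα0).mul hp).congr_deriv (by rw [Pi.inv_apply]; field_simp; ring)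

end DiagonalScaling

theorem HasDerivAt.rpow_const_of_logDeriv {f : ℝ → ℝ} {ℓ t : ℝ}
    (hf : HasDerivAt f (ℓ * f t) t) (hpos : 0 < f t) (r : ℝ) :
    HasDerivAt (fun s => f s ^ r) (r * ℓ * f t ^ r) t :=
  (hf.rpow_const (Or.inl hpos.ne')).congr_deriv <| by
    rw [Real.rpow_sub_one hpos.ne']
    field_simp

theorem HasDerivAt.mul_const_div_mul_const {u v : ℝ → ℝ} {u' v' c d t : ℝ}
    (hu : HasDerivAt u u' t) (hv : HasDerivAt v v' t) (hu0 : u t ≠ 0) (hv0 : v t ≠ 0)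
    (hd : d ≠ 0) :
    HasDerivAt (fun s => u s * c / (v s * d))
      ((u' / u t - v' / v t) * (u t * c / (v t * d))) t :=
  ((hu.mul_const c).div (hv.mul_const d) (mul_ne_zero hv0 hd)).congr_deriv <| by
    field_simp

theorem sq_mul_eq_mul_of_pow_four_eq {b₀ b₂ c₀ c₂ α D : ℝ} (hb₀ : 0 < b₀) (hc₀ : 0 < c₀)
    (hD : 0 < D) (hα4 : α ^ 4 = b₂ * c₀ / (b₀ * c₂))
    (hD2 : D ^ 2 = b₀ * b₂ / (c₀ * c₂)) :
    α ^ 2 * b₀ = D * c₀ := by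
  rw [← pow_left_inj₀ (by positivity) (by positivity) two_ne_zero]
  calc (α ^ 2 * b₀) ^ 2 = α ^ 4 * b₀ ^ 2 := by ring
    _ = D ^ 2 * c₀ ^ 2 := by rw [hα4, hD2]; field_simp
    _ = (D * c₀) ^ 2 := by ring

theorem div_sq_eq_mul_of_pow_four_eq {b₀ b₂ c₀ c₂ α D : ℝ} (hb₂ : 0 < b₂)
    (hc₂ : 0 < c₂) (hD : 0 < D) (hα4 : α ^ 4 = b₂ * c₀ / (b₀ * c₂))
    (hD2 : D ^ 2 = b₀ * b₂ / (c₀ * c₂)) :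
    b₂ / α ^ 2 = D * c₂ := by
  rw [← pow_left_inj₀ (by positivity) (by positivity) two_ne_zero]
  calc (b₂ / α ^ 2) ^ 2 = b₂ ^ 2 / α ^ 4 := by ring
    _ = D ^ 2 * c₂ ^ 2 := by rw [hα4, hD2]; field_simp
    _ = (D * c₂) ^ 2 := by ring

theorem sqrt_mul_eq_of_sqrt_inv_mul_eq {q B c : ℝ} (hq : 0 < q) (h : √q⁻¹ * B = c) :
    √q * c = B := by
  rw [← h, Real.sqrt_inv, ← mul_assoc, mul_inv_cancel₀ (Real.sqrt_pos.mpr hq).ne', one_mul]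

theorem diag_transform_maps_solutions_general
    (b₀ b₁ b₂ : ℝ → ℝ)
    (hb₀ : Differentiable ℝ b₀) (hb₂ : Differentiable ℝ b₂)
    (hb₀pos : ∀ t, 0 < b₀ t) (hb₂pos : ∀ t, 0 < b₂ t)
    (c₀ c₁ c₂ : ℝ) (hc₀ : 0 < c₀) (hc₂ : 0 < c₂)
    (hint : ∀ t, Real.sqrt (c₀ * c₂ / (b₀ t * b₂ t)) *
      (b₁ t + (1 / 2) * (deriv b₂ t / b₂ t - deriv b₀ t / b₀ t)) = c₁)
    (α D : ℝ → ℝ)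
    (hα : ∀ t, α t = (b₂ t * c₀ / (b₀ t * c₂)) ^ ((1 : ℝ) / 4))
    (hD : ∀ t, D t = Real.sqrt (b₀ t * b₂ t / (c₀ * c₂)))
    (x p : ℝ → ℝ)
    (hx : ∀ t, HasDerivAt x (b₁ t / 2 * x t + b₀ t * p t) t)
    (hp : ∀ t, HasDerivAt p (-b₂ t * x t - b₁ t / 2 * p t) t) :
    ∀ t, HasDerivAt (fun s => α s * x s)
        (D t * (c₁ / 2 * (α t * x t) + c₀ * ((α t)⁻¹ * p t))) t ∧
      HasDerivAt (fun s => (α s)⁻¹ * p s)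
        (D t * (-c₂ * (α t * x t) - c₁ / 2 * ((α t)⁻¹ * p t))) t := by
  intro t
  have hb₀t := hb₀pos t
  have hb₂t := hb₂pos t
  set L := deriv b₂ t / b₂ t - deriv b₀ t / b₀ t
  have hg : 0 < b₂ t * c₀ / (b₀ t * c₂) := by positivity
  have hαt : 0 < α t := hα t ▸ Real.rpow_pos_of_pos hg _
  have hDt : 0 < D t := hD t ▸ Real.sqrt_pos.mpr (by positivity)
  have hα4 : α t ^ 4 = b₂ t * c₀ / (b₀ t * c₂) := by
    rw [hα t, one_div]
    exact_mod_cast Real.rpow_inv_natCast_pow hg.le (n := 4) (by norm_num)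
  have hD2 : D t ^ 2 = b₀ t * b₂ t / (c₀ * c₂) := hD t ▸ Real.sq_sqrt (by positivity)
  have hα' : HasDerivAt α (1 / 4 * L * α t) t := by
    rw [funext hα]
    exact ((hb₂ t).hasDerivAt.mul_const_div_mul_const (hb₀ t).hasDerivAt hb₂t.ne' hb₀t.ne'
      hc₂.ne').rpow_const_of_logDeriv hg _
  have hc₀' := sq_mul_eq_mul_of_pow_four_eq hb₀t hc₀ hDt hα4 hD2
  have hc₂' := div_sq_eq_mul_of_pow_four_eq hb₂t hc₂ hDt hα4 hD2
  have hc₁' : D t * c₁ = b₁ t + 1 / 2 * L := by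
    rw [hD t]
    refine sqrt_mul_eq_of_sqrt_inv_mul_eq (by positivity) ?_
    rw [inv_div, hint t]
  refine ⟨(hα'.diag_scale_fst (hx t) hαt.ne').congr_deriv ?_,
    (hα'.diag_scale_snd (hp t) hαt.ne').congr_deriv ?_⟩
  · linear_combination (-(α t * x t) / 2) * hc₁' + ((α t)⁻¹ * p t) * hc₀'
  · linear_combination (-(α t * x t)) * hc₂' + ((α t)⁻¹ * p t / 2) * hc₁'

/-- Under the integrability condition
`√(c₀ c₂/(b₀ b₂))·[b₁ + (1/2)(b₂'/b₂ − b₀'/b₀)] = c₁`, setting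
`α = (b₂ c₀/(b₀ c₂))^{1/4}` and `D = √(b₀ b₂/(c₀ c₂))`, every solution
`ξ = (x, p)` of the system `x' = (b₁/2) x + b₀ p`, `p' = −b₂ x − (b₁/2) p` is mapped by
`ξ̃ = (α x, α⁻¹ p)` to a solution of `x̃' = D(c₁/2 x̃ + c₀ p̃)`, `p̃' = D(−c₂ x̃ − c₁/2 p̃)`. -/
theorem diag_transform_maps_solutions
    (b₀ b₁ b₂ : ℝ → ℝ)
    (hb₀ : Differentiable ℝ b₀) (hb₁ : Differentiable ℝ b₁) (hb₂ : Differentiable ℝ b₂)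
    (hb₀pos : ∀ t, 0 < b₀ t) (hb₂pos : ∀ t, 0 < b₂ t)
    (c₀ c₁ c₂ : ℝ) (hc₀ : 0 < c₀) (hc₂ : 0 < c₂)
    (hint : ∀ t, Real.sqrt (c₀ * c₂ / (b₀ t * b₂ t)) *
      (b₁ t + (1 / 2) * (deriv b₂ t / b₂ t - deriv b₀ t / b₀ t)) = c₁)
    (α D : ℝ → ℝ)
    (hα : ∀ t, α t = (b₂ t * c₀ / (b₀ t * c₂)) ^ ((1 : ℝ) / 4))
    (hD : ∀ t, D t = Real.sqrt (b₀ t * b₂ t / (c₀ * c₂)))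
    (x p : ℝ → ℝ)
    (hx : ∀ t, HasDerivAt x (b₁ t / 2 * x t + b₀ t * p t) t)
    (hp : ∀ t, HasDerivAt p (-b₂ t * x t - b₁ t / 2 * p t) t) :
    ∀ t, HasDerivAt (fun s => α s * x s)
        (D t * (c₁ / 2 * (α t * x t) + c₀ * ((α t)⁻¹ * p t))) t ∧
      HasDerivAt (fun s => (α s)⁻¹ * p s)
        (D t * (-c₂ * (α t * x t) - c₁ / 2 * ((α t)⁻¹ * p t))) t :=
  diag_transform_maps_solutions_general b₀ b₁ b₂ hb₀ hb₂ hb₀pos hb₂pos c₀ c₁ c₂ hc₀ hc₂ hint α D hα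
    hD x p hx hp
end

section
/- Let ω > 0, L > 0 and c₁ ∈ ℝ with c₁² / 4 − 1 > 0 and c₁ ≠ 0, and set ω̃ = √(c₁²/4 − 1). Define τ(t) = (1/c₁) · ln(L/(L − c₁ ω t)) on the interval J of times t for which L − c₁ ω t > 0 (note 0 ∈ J and τ(0) = 0). Then for any constants a, b ∈ ℝ, the function x(t) = √((L − c₁ ω t)/ω) · [ (cosh(ω̃ τ(t)) + (c₁/(2ω̃)) sinh(ω̃ τ(t))) a + (1/ω̃) sinh(ω̃ τ(t)) b ] satisfies x''(t) + (ω²/(L − c₁ ω t)²) x(t) = 0 for all t ∈ J. -/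
/-!
In the variable `u = L - c₁ ω t` the equation reads `u² y'' + y / c₁² = 0`, an Euler equation.
Its indicial roots are `p = 1/2 ± k` with `k = ω̃ / c₁`: both satisfy `p (p - 1) = k² - 1/4`,
and `c₁² (k² - 1/4) = ω̃² - c₁²/4 = -1`. Writing `cosh` and `sinh` through exponentials and
using `exp (r · log (L / u)) = L ^ r · u ^ (-r)`, the proposed solution is a linear combination
of `u ^ (1/2 - k)` and `u ^ (1/2 + k)`.
-/

open Real Filter Topology

theorem deriv_deriv_eq_of_eventually_hasDerivAt {𝕜 F : Type*} [NontriviallyNormedField 𝕜]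
    [NormedAddCommGroup F] [NormedSpace 𝕜 F] {f f' : 𝕜 → F} {f'' : F} {t : 𝕜}
    (hf : ∀ᶠ s in 𝓝 t, HasDerivAt f (f' s) s) (hf' : HasDerivAt f' f'' t) :
    deriv (deriv f) t = f'' := by
  have hderiv : deriv f =ᶠ[𝓝 t] f' := hf.mono fun _ hs => hs.deriv
  rw [hderiv.deriv_eq, hf'.deriv]

theorem hasDerivAt_affine_rpow {L c p s : ℝ} (hs : L - c * s ≠ 0) :
    HasDerivAt (fun s => (L - c * s) ^ p) (-c * p * (L - c * s) ^ (p - 1)) s := by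
  have hlin : HasDerivAt (fun s => L - c * s) (-c) s := by
    simpa using ((hasDerivAt_id s).const_mul c).const_sub L
  exact hlin.rpow_const (Or.inl hs)

theorem deriv_deriv_affine_rpow_add {L c p q A B t : ℝ} (ht : 0 < L - c * t) :
    deriv (deriv fun s => A * (L - c * s) ^ p + B * (L - c * s) ^ q) t =
      c ^ 2 * (A * (p * (p - 1)) * (L - c * t) ^ p + B * (q * (q - 1)) * (L - c * t) ^ q) /
        (L - c * t) ^ 2 := by
  have hpos : ∀ᶠ s in 𝓝 t, 0 < L - c * s :=
    (continuous_const.sub (continuous_const.mul continuous_id)).continuousAt.eventually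
      (lt_mem_nhds ht)
  rw [deriv_deriv_eq_of_eventually_hasDerivAt
    (f := fun s => A * (L - c * s) ^ p + B * (L - c * s) ^ q)
    (f' := fun s => A * (-c * p * (L - c * s) ^ (p - 1)) + B * (-c * q * (L - c * s) ^ (q - 1)))
    (hpos.mono fun s hs => ((hasDerivAt_affine_rpow hs.ne').const_mul A).add
      ((hasDerivAt_affine_rpow hs.ne').const_mul B))
    ((((hasDerivAt_affine_rpow ht.ne').const_mul (-c * p)).const_mul A).add
      (((hasDerivAt_affine_rpow ht.ne').const_mul (-c * q)).const_mul B))]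
  have hsub (r : ℝ) : (L - c * t) ^ (r - 1 - 1) = (L - c * t) ^ r / (L - c * t) ^ 2 := by
    rw [sub_sub, one_add_one_eq_two, ← Nat.cast_ofNat, rpow_sub_natCast ht.ne']
  rw [hsub, hsub]
  ring

theorem affine_rpow_add_solves_euler {L c k p q A B t : ℝ}
    (hp : c ^ 2 * (p * (p - 1)) + k = 0) (hq : c ^ 2 * (q * (q - 1)) + k = 0)
    (ht : 0 < L - c * t) :
    deriv (deriv fun s => A * (L - c * s) ^ p + B * (L - c * s) ^ q) t +
      k / (L - c * t) ^ 2 * (A * (L - c * t) ^ p + B * (L - c * t) ^ q) = 0 := by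
  rw [deriv_deriv_affine_rpow_add ht]
  field_simp
  linear_combination A * (L - c * t) ^ p * hp + B * (L - c * t) ^ q * hq

theorem cosh_add_sinh_comb_eq_exp (θ m n a b : ℝ) :
    (cosh θ + m * sinh θ) * a + n * sinh θ * b =
      ((1 + m) * a + n * b) / 2 * exp θ + ((1 - m) * a - n * b) / 2 * exp (-θ) := by
  rw [cosh_eq, sinh_eq]
  ring

theorem sqrt_div_mul_exp_mul_log_div {ω L u : ℝ} (hL : 0 < L) (hu : 0 < u) (r : ℝ) :
    √(u / ω) * exp (r * log (L / u)) = L ^ r / √ω * u ^ (1 / 2 - r) := by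
  rw [mul_comm r, ← rpow_def_of_pos (div_pos hL hu), div_rpow hL.le hu.le, sqrt_div hu.le,
    sqrt_eq_rpow, rpow_sub hu]
  ring

theorem tdfho_inverse_square_frequency_solution_general
    (ω L c₁ : ℝ) (hL : 0 < L) (hc₁ : c₁ ≠ 0)
    (h : 0 < c₁ ^ 2 / 4 - 1)
    (ωtil : ℝ) (hωtil : ωtil = Real.sqrt (c₁ ^ 2 / 4 - 1))
    (J : Set ℝ) (hJ : J = {t : ℝ | 0 < L - c₁ * ω * t})
    (τ : ℝ → ℝ) (hτ : ∀ t, τ t = (1 / c₁) * Real.log (L / (L - c₁ * ω * t)))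
    (a b : ℝ) (x : ℝ → ℝ)
    (hx : ∀ t, x t = Real.sqrt ((L - c₁ * ω * t) / ω) *
      ((Real.cosh (ωtil * τ t) + c₁ / (2 * ωtil) * Real.sinh (ωtil * τ t)) * a +
        1 / ωtil * Real.sinh (ωtil * τ t) * b)) :
    (0 : ℝ) ∈ J ∧ τ 0 = 0 ∧
      ∀ t ∈ J, deriv (deriv x) t + ω ^ 2 / (L - c₁ * ω * t) ^ 2 * x t = 0 := by
  refine ⟨by simp [hJ, hL], by simp [hτ, div_self hL.ne'], fun t ht => ?_⟩
  set k := ωtil / c₁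
  set α := ((1 + c₁ / (2 * ωtil)) * a + 1 / ωtil * b) / 2
  set β := ((1 - c₁ / (2 * ωtil)) * a - 1 / ωtil * b) / 2
  have hx_eq : ∀ s ∈ J, x s = α * (L ^ k / √ω) * (L - c₁ * ω * s) ^ (1 / 2 - k) +
      β * (L ^ (-k) / √ω) * (L - c₁ * ω * s) ^ (1 / 2 + k) := by
    intro s hs
    rw [hJ] at hs
    have hθ : ωtil * τ s = k * log (L / (L - c₁ * ω * s)) := by rw [hτ]; ring
    have hθ' : -(ωtil * τ s) = -k * log (L / (L - c₁ * ω * s)) := by rw [hθ]; ring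
    rw [hx, cosh_add_sinh_comb_eq_exp, mul_add, mul_left_comm, mul_left_comm _ β, hθ', hθ,
      sqrt_div_mul_exp_mul_log_div hL hs, sqrt_div_mul_exp_mul_log_div hL hs, sub_neg_eq_add]
    ring
  have hJ_open : IsOpen J := hJ ▸ isOpen_lt continuous_const (by fun_prop)
  have hωtil_sq : ωtil ^ 2 = c₁ ^ 2 / 4 - 1 := hωtil ▸ sq_sqrt h.le
  have hk_sq : c₁ ^ 2 * k ^ 2 = ωtil ^ 2 := by rw [← mul_pow, mul_div_cancel₀ _ hc₁]
  have hroot (p : ℝ) (hp : p * (p - 1) = k ^ 2 - 1 / 4) :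
      (c₁ * ω) ^ 2 * (p * (p - 1)) + ω ^ 2 = 0 := by
    rw [hp]
    linear_combination ω ^ 2 * hk_sq + ω ^ 2 * hωtil_sq
  rw [((eventuallyEq_of_mem (hJ_open.mem_nhds ht) hx_eq).deriv).deriv_eq, hx_eq t ht]
  rw [hJ] at ht
  exact affine_rpow_add_solves_euler (hroot _ (by ring)) (hroot _ (by ring)) ht

/-- For `ω > 0`, `L > 0`, `c₁ ≠ 0` with `c₁²/4 − 1 > 0`,
`ω̃ = √(c₁²/4 − 1)`, and `τ(t) = (1/c₁) ln(L/(L − c₁ωt))` on the interval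
`J = {t | L − c₁ωt > 0}` (which contains `0`, and `τ(0) = 0`), the function
`x(t) = √((L − c₁ωt)/ω)·[(cosh(ω̃τ) + (c₁/(2ω̃))sinh(ω̃τ)) a + (1/ω̃)sinh(ω̃τ) b]`
satisfies `x'' + (ω²/(L − c₁ωt)²) x = 0` on `J`. -/
theorem tdfho_inverse_square_frequency_solution
    (ω L c₁ : ℝ) (hω : 0 < ω) (hL : 0 < L) (hc₁ : c₁ ≠ 0)
    (h : 0 < c₁ ^ 2 / 4 - 1)
    (ωtil : ℝ) (hωtil : ωtil = Real.sqrt (c₁ ^ 2 / 4 - 1))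
    (J : Set ℝ) (hJ : J = {t : ℝ | 0 < L - c₁ * ω * t})
    (τ : ℝ → ℝ) (hτ : ∀ t, τ t = (1 / c₁) * Real.log (L / (L - c₁ * ω * t)))
    (a b : ℝ) (x : ℝ → ℝ)
    (hx : ∀ t, x t = Real.sqrt ((L - c₁ * ω * t) / ω) *
      ((Real.cosh (ωtil * τ t) + c₁ / (2 * ωtil) * Real.sinh (ωtil * τ t)) * a +
        1 / ωtil * Real.sinh (ωtil * τ t) * b)) :
    (0 : ℝ) ∈ J ∧ τ 0 = 0 ∧
      ∀ t ∈ J, deriv (deriv x) t + ω ^ 2 / (L - c₁ * ω * t) ^ 2 * x t = 0 :=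
  tdfho_inverse_square_frequency_solution_general ω L c₁ hL hc₁ h ωtil hωtil J hJ τ hτ a b x hx
end

section
/- Let ω > 0, u₁ ∈ ℝ, let V : I → (0, ∞) be a differentiable function on an interval I, and let F : I → ℝ. Consider the transformation curve Ā₀(t) = [[1/V(t), 0], [−u₁, V(t)]] applied to the system with coefficients (b₀, b₁, b₂) = (1, 0, F ω²), which produces transformed coefficients b'₀ = 1/V², b'₁ = 2u₁/V − 2V'/V, b'₂ = V² F ω² + u₁² − u₁ V'. Then there exists a function D : I → ℝ such that (b'₀, b'₁, b'₂) = (D, 0, D ω²) on I if and only if V'(t) = u₁ for all t ∈ I (so V(t) = u₁ t + u₀ with u₀ = V(t₀) − u₁ t₀) and F(t) = 1/V(t)⁴ for all t ∈ I; in that case D(t) = 1/V(t)². -/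
/-!
Since `V > 0`, the condition `b'₁ = 0` is exactly `V' = u₁`; substituting this into
`b'₂ = b'₀ ω²` cancels the `u₁` terms and, as `ω ≠ 0`, leaves `V² F = 1 / V²`, i.e. `F = 1 / V⁴`.
Forcing `D = b'₀` gives `D = 1 / V²`, and a function with constant derivative `u₁` on an
interval is affine with slope `u₁`.
-/

namespace Convex

variable {𝕜 G : Type*} [RCLike 𝕜] [NormedAddCommGroup G] [NormedSpace 𝕜 G]
  {f : 𝕜 → G} {c : G} {s : Set 𝕜} {x y : 𝕜}

theorem image_sub_eq_of_hasDerivWithinAt_const (hs : Convex ℝ s)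
    (hf : ∀ z ∈ s, HasDerivWithinAt f c s z) (hx : x ∈ s) (hy : y ∈ s) :
    f y - f x = (y - x) • c := by
  have hderiv : ∀ z ∈ s, HasDerivWithinAt (fun z ↦ f z - z • c) 0 s z := fun z hz ↦ by
    convert (hf z hz).sub ((hasDerivWithinAt_id z s).smul_const c) using 1
    · rfl
    · rw [one_smul, sub_self]
  have hbound := hs.norm_image_sub_le_of_norm_hasDerivWithin_le hderiv (C := 0)
    (fun _ _ ↦ by simp) hx hy
  rw [zero_mul, norm_le_zero_iff, sub_sub_sub_comm, sub_eq_zero, ← sub_smul] at hbound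
  exact hbound

end Convex

theorem two_mul_div_sub_two_mul_div_eq_zero_iff {v a b : ℝ} (hv : v ≠ 0) :
    2 * a / v - 2 * b / v = 0 ↔ b = a := by
  rw [← sub_div, div_eq_zero_iff, or_iff_left hv, ← mul_sub, mul_eq_zero, sub_eq_zero]
  simp [eq_comm]

theorem sq_mul_mul_sq_add_sq_sub_mul_self_eq_iff {v f w u : ℝ} (hv : v ≠ 0) (hw : w ≠ 0) :
    v ^ 2 * f * w ^ 2 + u ^ 2 - u * u = 1 / v ^ 2 * w ^ 2 ↔ f = 1 / v ^ 4 := by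
  have hfactor : v ^ 2 * f * w ^ 2 + u ^ 2 - u * u - 1 / v ^ 2 * w ^ 2
      = (v ^ 2 * w ^ 2) * (f - 1 / v ^ 4) := by
    field_simp
    ring
  rw [← sub_eq_zero, hfactor, mul_eq_zero, or_iff_right (by positivity), sub_eq_zero]

theorem lower_triangular_transform_integrability_general
    (ω u₁ : ℝ) (hω : 0 < ω)
    (I : Set ℝ) (hIconv : Convex ℝ I)
    (V V' F : ℝ → ℝ) (hVpos : ∀ t ∈ I, 0 < V t)
    (hV : ∀ t ∈ I, HasDerivAt V (V' t) t)
    (b'₀ b'₁ b'₂ : ℝ → ℝ)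
    (hb'₀ : ∀ t ∈ I, b'₀ t = 1 / (V t) ^ 2)
    (hb'₁ : ∀ t ∈ I, b'₁ t = 2 * u₁ / V t - 2 * V' t / V t)
    (hb'₂ : ∀ t ∈ I, b'₂ t = (V t) ^ 2 * F t * ω ^ 2 + u₁ ^ 2 - u₁ * V' t) :
    ((∃ D : ℝ → ℝ, ∀ t ∈ I, b'₀ t = D t ∧ b'₁ t = 0 ∧ b'₂ t = D t * ω ^ 2) ↔
      ((∀ t ∈ I, V' t = u₁) ∧ (∀ t ∈ I, F t = 1 / (V t) ^ 4))) ∧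
    ((∀ t ∈ I, V' t = u₁) →
      ∀ t₀ ∈ I, ∀ t ∈ I, V t = u₁ * t + (V t₀ - u₁ * t₀)) ∧
    (∀ D : ℝ → ℝ, (∀ t ∈ I, b'₀ t = D t ∧ b'₁ t = 0 ∧ b'₂ t = D t * ω ^ 2) →
      ∀ t ∈ I, D t = 1 / (V t) ^ 2) := by
  have hb'₁_iff : ∀ t ∈ I, b'₁ t = 0 ↔ V' t = u₁ := fun t ht ↦ by
    rw [hb'₁ t ht, two_mul_div_sub_two_mul_div_eq_zero_iff (hVpos t ht).ne']
  have hb'₂_iff : ∀ t ∈ I, V' t = u₁ → (b'₂ t = b'₀ t * ω ^ 2 ↔ F t = 1 / V t ^ 4) :=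
    fun t ht hV't ↦ by
      rw [hb'₂ t ht, hb'₀ t ht, hV't,
        sq_mul_mul_sq_add_sq_sub_mul_self_eq_iff (hVpos t ht).ne' hω.ne']
  refine ⟨⟨?_, ?_⟩, ?_, ?_⟩
  · rintro ⟨D, hD⟩
    have hV' : ∀ t ∈ I, V' t = u₁ := fun t ht ↦ (hb'₁_iff t ht).1 (hD t ht).2.1
    refine ⟨hV', fun t ht ↦ (hb'₂_iff t ht (hV' t ht)).1 ?_⟩
    rw [(hD t ht).1]
    exact (hD t ht).2.2
  · rintro ⟨hV', hF⟩
    exact ⟨b'₀, fun t ht ↦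
      ⟨rfl, (hb'₁_iff t ht).2 (hV' t ht), (hb'₂_iff t ht (hV' t ht)).2 (hF t ht)⟩⟩
  · intro hV' t₀ ht₀ t ht
    have haffine := hIconv.image_sub_eq_of_hasDerivWithinAt_const
      (fun z hz ↦ hV' z hz ▸ (hV z hz).hasDerivWithinAt) ht₀ ht
    rw [smul_eq_mul] at haffine
    linarith
  · intro D hD t ht
    rw [← (hD t ht).1, hb'₀ t ht]

/-- Applying the curve `Ā₀ = [[1/V, 0], [−u₁, V]]` to the TDFHO with
coefficients `(1, 0, Fω²)` yields transformed coefficients `b'₀ = 1/V²`,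
`b'₁ = 2u₁/V − 2V'/V`, `b'₂ = V²Fω² + u₁² − u₁V'`. There exists `D` with
`(b'₀, b'₁, b'₂) = (D, 0, Dω²)` on the interval `I` iff `V' = u₁` on `I`
(so `V(t) = u₁ t + u₀` with `u₀ = V(t₀) − u₁ t₀`) and `F = 1/V⁴` on `I`;
in that case `D = 1/V²` on `I`. -/
theorem lower_triangular_transform_integrability
    (ω u₁ : ℝ) (hω : 0 < ω)
    (I : Set ℝ) (hIopen : IsOpen I) (hIconv : Convex ℝ I)
    (V V' F : ℝ → ℝ) (hVpos : ∀ t ∈ I, 0 < V t)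
    (hV : ∀ t ∈ I, HasDerivAt V (V' t) t)
    (b'₀ b'₁ b'₂ : ℝ → ℝ)
    (hb'₀ : ∀ t ∈ I, b'₀ t = 1 / (V t) ^ 2)
    (hb'₁ : ∀ t ∈ I, b'₁ t = 2 * u₁ / V t - 2 * V' t / V t)
    (hb'₂ : ∀ t ∈ I, b'₂ t = (V t) ^ 2 * F t * ω ^ 2 + u₁ ^ 2 - u₁ * V' t) :
    ((∃ D : ℝ → ℝ, ∀ t ∈ I, b'₀ t = D t ∧ b'₁ t = 0 ∧ b'₂ t = D t * ω ^ 2) ↔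
      ((∀ t ∈ I, V' t = u₁) ∧ (∀ t ∈ I, F t = 1 / (V t) ^ 4))) ∧
    ((∀ t ∈ I, V' t = u₁) →
      ∀ t₀ ∈ I, ∀ t ∈ I, V t = u₁ * t + (V t₀ - u₁ * t₀)) ∧
    (∀ D : ℝ → ℝ, (∀ t ∈ I, b'₀ t = D t ∧ b'₁ t = 0 ∧ b'₂ t = D t * ω ^ 2) →
      ∀ t ∈ I, D t = 1 / (V t) ^ 2) :=
  lower_triangular_transform_integrability_general ω u₁ hω I hIconv V V' F hVpos hV b'₀ b'₁ b'₂ hb'₀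
    hb'₁ hb'₂
end

section
/- Let ω > 0, u₀ > 0, u₁ ≠ 0, and x₀, p₀ ∈ ℝ. Set V(t) = u₁ t + u₀ and τ(t) = (1/u₁)(1/u₀ − 1/V(t)), defined on the interval J of times t with V(t) > 0 (note 0 ∈ J). Then the function x(t) = V(t) · [ cos(ω τ(t)) · (x₀/u₀) + (1/ω) sin(ω τ(t)) · (−u₁ x₀ + u₀ p₀) ] satisfies x''(t) + (ω²/V(t)⁴) x(t) = 0 for all t ∈ J, with x(0) = x₀ and x'(0) = p₀. -/
/-!
Write `x = V · (y ∘ τ)`. Since `τ' = 1 / V²`, the chain rule gives `x' = V' · (y ∘ τ) + (y' ∘ τ) / V`,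
and because `V` is affine the two `V'`-terms cancel on differentiating again, leaving
`x'' = (y'' ∘ τ) / V³`. For `y` a solution of `y'' = -ω² y` this is `x'' = -(ω² / V⁴) x`; the
initial data of `y` are chosen so that `x 0 = x₀` and `x' 0 = p₀`.
-/

open Real Filter Topology

noncomputable def harmonicSolution (ω a b s : ℝ) : ℝ :=
  cos (ω * s) * a + 1 / ω * sin (ω * s) * b

section HarmonicSolution

variable {ω : ℝ} (a b s : ℝ)

theorem hasDerivAt_harmonicSolution (hω : ω ≠ 0) :
    HasDerivAt (harmonicSolution ω a b) (-ω * sin (ω * s) * a + cos (ω * s) * b) s := by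
  have hωs : HasDerivAt (fun s => ω * s) ω s := by simpa using (hasDerivAt_id s).const_mul ω
  refine ((hωs.cos.mul_const a).add ((hωs.sin.const_mul (1 / ω)).mul_const b)).congr_deriv ?_
  field_simp

theorem hasDerivAt_harmonicSolution_deriv (hω : ω ≠ 0) :
    HasDerivAt (fun s => -ω * sin (ω * s) * a + cos (ω * s) * b)
      (-ω ^ 2 * harmonicSolution ω a b s) s := by
  have hωs : HasDerivAt (fun s => ω * s) ω s := by simpa using (hasDerivAt_id s).const_mul ω
  refine (((hωs.sin.const_mul (-ω)).mul_const a).add (hωs.cos.mul_const b)).congr_deriv ?_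
  simp only [harmonicSolution]
  field_simp
  ring

end HarmonicSolution

section Reparametrisation

variable {V τ y y' y'' : ℝ → ℝ} {v t : ℝ}

theorem hasDerivAt_const_mul_sub_inv (c : ℝ) (hV : HasDerivAt V v t) (hv : v ≠ 0)
    (hVt : V t ≠ 0) : HasDerivAt (fun s => 1 / v * (c - 1 / V s)) (V t ^ 2)⁻¹ t := by
  refine (((hasDerivAt_const t c).sub ((hasDerivAt_const t 1).div hV hVt)).const_mul
    (1 / v)).congr_deriv ?_
  field_simp
  ring

theorem hasDerivAt_mul_comp_of_hasDerivAt_inv_sq (hV : HasDerivAt V v t)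
    (hτ : HasDerivAt τ (V t ^ 2)⁻¹ t) (hy : ∀ s, HasDerivAt y (y' s) s) (hVt : V t ≠ 0) :
    HasDerivAt (fun s => V s * y (τ s)) (v * y (τ t) + y' (τ t) / V t) t := by
  refine (hV.mul ((hy _).comp t hτ)).congr_deriv ?_
  simp only [Function.comp_apply]
  field_simp

theorem hasDerivAt_deriv_mul_comp_of_hasDerivAt_inv_sq (hV : HasDerivAt V v t)
    (hτ : HasDerivAt τ (V t ^ 2)⁻¹ t) (hy : ∀ s, HasDerivAt y (y' s) s)
    (hy' : ∀ s, HasDerivAt y' (y'' s) s) (hVt : V t ≠ 0) :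
    HasDerivAt (fun s => v * y (τ s) + y' (τ s) / V s) (y'' (τ t) / V t ^ 3) t := by
  refine ((((hy _).comp t hτ).const_mul v).add (((hy' _).comp t hτ).div hV hVt)).congr_deriv ?_
  simp only [Function.comp_apply]
  field_simp
  ring

theorem deriv_deriv_mul_comp_add_eq_zero {ω : ℝ} {U : Set ℝ} (hU : IsOpen U)
    (hV : ∀ t, HasDerivAt V v t) (hVU : ∀ t ∈ U, V t ≠ 0)
    (hτ : ∀ t ∈ U, HasDerivAt τ (V t ^ 2)⁻¹ t) (hy : ∀ s, HasDerivAt y (y' s) s)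
    (hy' : ∀ s, HasDerivAt y' (-ω ^ 2 * y s) s) (ht : t ∈ U) :
    deriv (deriv fun s => V s * y (τ s)) t + ω ^ 2 / V t ^ 4 * (V t * y (τ t)) = 0 := by
  have hderiv : deriv (fun s => V s * y (τ s)) =ᶠ[𝓝 t] fun s => v * y (τ s) + y' (τ s) / V s := by
    filter_upwards [hU.mem_nhds ht] with s hs
    exact (hasDerivAt_mul_comp_of_hasDerivAt_inv_sq (hV s) (hτ s hs) hy (hVU s hs)).deriv
  rw [hderiv.deriv_eq, (hasDerivAt_deriv_mul_comp_of_hasDerivAt_inv_sq (hV t) (hτ t ht) hy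
    hy' (hVU t ht)).deriv]
  have hVt := hVU t ht
  field_simp
  ring

end Reparametrisation

/-- For `ω > 0`, `u₀ > 0`, `u₁ ≠ 0`, `V(t) = u₁t + u₀`,
`τ(t) = (1/u₁)(1/u₀ − 1/V(t))` on `J = {t | V(t) > 0}` (which contains `0`), the
function `x(t) = V(t)[cos(ωτ)·(x₀/u₀) + (1/ω)sin(ωτ)·(−u₁x₀ + u₀p₀)]` satisfies
`x'' + (ω²/V⁴) x = 0` on `J`, with `x(0) = x₀` and `x'(0) = p₀`. -/
theorem tdfho_inverse_quartic_frequency_solution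
    (ω u₀ u₁ x₀ p₀ : ℝ) (hω : 0 < ω) (hu₀ : 0 < u₀) (hu₁ : u₁ ≠ 0)
    (V : ℝ → ℝ) (hV : ∀ t, V t = u₁ * t + u₀)
    (τ : ℝ → ℝ) (hτ : ∀ t, τ t = (1 / u₁) * (1 / u₀ - 1 / V t))
    (J : Set ℝ) (hJ : J = {t : ℝ | 0 < V t})
    (x : ℝ → ℝ)
    (hx : ∀ t, x t = V t * (Real.cos (ω * τ t) * (x₀ / u₀) +
      (1 / ω) * Real.sin (ω * τ t) * (-u₁ * x₀ + u₀ * p₀))) :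
    (0 : ℝ) ∈ J ∧
      (∀ t ∈ J, deriv (deriv x) t + ω ^ 2 / (V t) ^ 4 * x t = 0) ∧
      x 0 = x₀ ∧ deriv x 0 = p₀ := by
  set y := harmonicSolution ω (x₀ / u₀) (-u₁ * x₀ + u₀ * p₀)
  have hxy : x = fun t => V t * y (τ t) := funext hx
  have hV' : ∀ t, HasDerivAt V u₁ t := fun t => by
    rw [funext hV]; simpa using ((hasDerivAt_id t).const_mul u₁).add_const u₀
  have hJV : ∀ t ∈ J, V t ≠ 0 := fun t ht => by subst hJ; exact ht.ne'
  have hJ_open : IsOpen J := by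
    rw [hJ, funext hV]; exact isOpen_lt continuous_const (by fun_prop)
  have hτ' : ∀ t ∈ J, HasDerivAt τ (V t ^ 2)⁻¹ t := fun t ht => by
    rw [funext hτ]; exact hasDerivAt_const_mul_sub_inv _ (hV' t) hu₁ (hJV t ht)
  have hV0 : V 0 = u₀ := by simp [hV]
  have hτ0 : τ 0 = 0 := by simp [hτ, hV0]
  have h0J : (0 : ℝ) ∈ J := by simpa [hJ, hV0]
  refine ⟨h0J, fun t ht => ?_, ?_, ?_⟩
  · rw [hxy]
    exact deriv_deriv_mul_comp_add_eq_zero hJ_open hV' hJV hτ'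
      (hasDerivAt_harmonicSolution _ _ · hω.ne') (hasDerivAt_harmonicSolution_deriv _ _ · hω.ne') ht
  · rw [hx, hτ0, hV0]
    simpa using mul_div_cancel₀ x₀ hu₀.ne'
  · rw [hxy, (hasDerivAt_mul_comp_of_hasDerivAt_inv_sq (hV' 0) (hτ' 0 h0J)
      (hasDerivAt_harmonicSolution _ _ · hω.ne') (hJV 0 h0J)).deriv, hτ0, hV0]
    simp only [harmonicSolution, mul_zero, cos_zero, sin_zero]
    field_simp
    ring
end

section
/- Let ω > 0, u₀ > 0, u₁ ∈ ℝ, set V(t) = u₁ t + u₀, and let J be the interval of times t with V(t) > 0. For every differentiable solution (x, p) : J → ℝ² of x'(t) = p(t), p'(t) = −(ω²/V(t)⁴) x(t), the function I₁(t) = (ω x(t)/V(t))² + (V(t) p(t) − u₁ x(t))² is constant on J. -/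
/-!
Along the flow, `ω x / V` and `V p - u₁ x` rotate into each other with angular velocity `ω / V²`
(the terms `u₁ p` cancel since `V' = u₁`), so the sum of their squares is stationary. A function with vanishing
derivative on the open interval `{V > 0}` is constant there.
-/

theorem convex_setOf_affine_pos (a b : ℝ) : Convex ℝ {t : ℝ | 0 < a * t + b} := by
  have h := convex_halfSpace_gt (IsLinearMap.isLinearMap_smul (R := ℝ) a) (-b)
  simpa only [smul_eq_mul, neg_lt_iff_pos_add] using h

noncomputable def inverseQuarticInvariant (ω u₁ : ℝ) (V x p : ℝ → ℝ) (t : ℝ) : ℝ :=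
  (ω * x t / V t) ^ 2 + (V t * p t - u₁ * x t) ^ 2

theorem hasDerivAt_inverseQuarticInvariant {ω u₁ t : ℝ} {V x p : ℝ → ℝ}
    (hV : HasDerivAt V u₁ t) (hVt : V t ≠ 0) (hx : HasDerivAt x (p t) t)
    (hp : HasDerivAt p (-(ω ^ 2 / V t ^ 4) * x t) t) :
    HasDerivAt (inverseQuarticInvariant ω u₁ V x p) 0 t := by
  have h := (((hx.const_mul ω).div hV hVt).pow 2).add (((hV.mul hp).sub (hx.const_mul u₁)).pow 2)
  refine h.congr_deriv ?_
  simp only [Pi.div_apply, Pi.sub_apply, Pi.mul_apply]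
  norm_num
  field_simp
  ring

theorem first_integral_I1_inverse_quartic_general
    (ω u₀ u₁ : ℝ)
    (V : ℝ → ℝ) (hV : ∀ t, V t = u₁ * t + u₀)
    (J : Set ℝ) (hJ : J = {t : ℝ | 0 < V t})
    (x p : ℝ → ℝ)
    (hx : ∀ t ∈ J, HasDerivAt x (p t) t)
    (hp : ∀ t ∈ J, HasDerivAt p (-(ω ^ 2 / (V t) ^ 4) * x t) t) :
    ∀ t ∈ J, ∀ s ∈ J,
      (ω * x t / V t) ^ 2 + (V t * p t - u₁ * x t) ^ 2 =
        (ω * x s / V s) ^ 2 + (V s * p s - u₁ * x s) ^ 2 := by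
  obtain rfl : V = fun t => u₁ * t + u₀ := funext hV
  subst hJ
  have hJ_open : IsOpen {t : ℝ | 0 < u₁ * t + u₀} := isOpen_lt continuous_const (by fun_prop)
  have hI₁' : ∀ t ∈ {t : ℝ | 0 < u₁ * t + u₀},
      HasDerivAt (inverseQuarticInvariant ω u₁ (fun t => u₁ * t + u₀) x p) 0 t := fun t ht =>
    hasDerivAt_inverseQuarticInvariant (by simpa using ((hasDerivAt_id t).const_mul u₁).add_const u₀)
      (ne_of_gt ht) (hx t ht) (hp t ht)
  intro t ht s hs
  exact hJ_open.is_const_of_deriv_eq_zero (convex_setOf_affine_pos u₁ u₀).isPreconnected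
    (fun r hr => (hI₁' r hr).differentiableAt.differentiableWithinAt)
    (fun r hr => (hI₁' r hr).deriv) ht hs

/-- For `ω > 0`, `u₀ > 0`, `V(t) = u₁t + u₀` and `J = {t | V(t) > 0}`,
along every solution of `x' = p`, `p' = −(ω²/V⁴)x` on `J` the function
`I₁(t) = (ωx/V)² + (Vp − u₁x)²` is constant on `J`. -/
theorem first_integral_I1_inverse_quartic
    (ω u₀ u₁ : ℝ) (hω : 0 < ω) (hu₀ : 0 < u₀)
    (V : ℝ → ℝ) (hV : ∀ t, V t = u₁ * t + u₀)
    (J : Set ℝ) (hJ : J = {t : ℝ | 0 < V t})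
    (x p : ℝ → ℝ)
    (hx : ∀ t ∈ J, HasDerivAt x (p t) t)
    (hp : ∀ t ∈ J, HasDerivAt p (-(ω ^ 2 / (V t) ^ 4) * x t) t) :
    ∀ t ∈ J, ∀ s ∈ J,
      (ω * x t / V t) ^ 2 + (V t * p t - u₁ * x t) ^ 2 =
        (ω * x s / V s) ^ 2 + (V s * p s - u₁ * x s) ^ 2 :=
  first_integral_I1_inverse_quartic_general ω u₀ u₁ V hV J hJ x p hx hp
end

section
/- Let F : ℝ → ℝ be continuous and let ρ : ℝ → (0, ∞) be twice differentiable satisfying the Milne–Pinney equation ρ''(t) + F(t) ρ(t) = 1/ρ(t)³ for all t. Then for every twice differentiable solution x : ℝ → ℝ of x''(t) + F(t) x(t) = 0, writing p(t) = x'(t), the Lewis invariant I_ρ(t) = (1/2) [ (ρ(t) p(t) − ρ'(t) x(t))² + (x(t)/ρ(t))² ] is constant in t. -/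
/-- If `ρ > 0` solves the Milne–Pinney equation `ρ'' + F ρ = 1/ρ³` and `x`
solves `x'' + F x = 0`, then with `p = x'` the Lewis invariant
`I_ρ(t) = (1/2)[(ρ p − ρ' x)² + (x/ρ)²]` is constant in `t`. -/
theorem lewis_invariant_constant
    (F : ℝ → ℝ) (hF : Continuous F)
    (ρ ρ' ρ'' : ℝ → ℝ) (hρpos : ∀ t, 0 < ρ t)
    (hρd : ∀ t, HasDerivAt ρ (ρ' t) t) (hρd' : ∀ t, HasDerivAt ρ' (ρ'' t) t)
    (hMP : ∀ t, ρ'' t + F t * ρ t = 1 / (ρ t) ^ 3)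
    (x p x'' : ℝ → ℝ)
    (hxd : ∀ t, HasDerivAt x (p t) t) (hpd : ∀ t, HasDerivAt p (x'' t) t)
    (hosc : ∀ t, x'' t + F t * x t = 0) :
    ∀ t, (1 / 2) * ((ρ t * p t - ρ' t * x t) ^ 2 + (x t / ρ t) ^ 2) =
      (1 / 2) * ((ρ 0 * p 0 - ρ' 0 * x 0) ^ 2 + (x 0 / ρ 0) ^ 2) := by
  set I : ℝ → ℝ := fun t =>
    (1 / 2) * ((ρ t * p t - ρ' t * x t) ^ 2 + (x t / ρ t) ^ 2) with hI
  have key : ∀ t, HasDerivAt I 0 t := by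
    intro t
    have hne : ρ t ≠ 0 := (hρpos t).ne'
    have h1 : HasDerivAt (fun s => ρ s * p s - ρ' s * x s)
        ((ρ' t * p t + ρ t * x'' t) - (ρ'' t * x t + ρ' t * p t)) t :=
      ((hρd t).mul (hpd t)).sub ((hρd' t).mul (hxd t))
    have h2 : HasDerivAt (fun s => ρ s * p s - ρ' s * x s) (ρ t * x'' t - ρ'' t * x t) t := by
      convert h1 using 1; ring
    have h3 : HasDerivAt (fun s => x s / ρ s)
        ((p t * ρ t - x t * ρ' t) / (ρ t) ^ 2) t := (hxd t).div (hρd t) hne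
    have h4 : HasDerivAt I
        ((1 / 2) * (2 * (ρ t * p t - ρ' t * x t) ^ 1 * (ρ t * x'' t - ρ'' t * x t)
          + 2 * (x t / ρ t) ^ 1 * ((p t * ρ t - x t * ρ' t) / (ρ t) ^ 2))) t := by
      exact (((h2.pow 2).add (h3.pow 2)).const_mul _)
    convert h4 using 1
    have hx2 : x'' t = -(F t * x t) := by linarith [hosc t]
    have hr2 : ρ'' t = 1 / (ρ t) ^ 3 - F t * ρ t := by linarith [hMP t]
    rw [hx2, hr2]
    field_simp
    ring
  intro t
  have := (key t)
  have hc : ∀ s, I s = I 0 := by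
    intro s
    have hdiff : ∀ u, DifferentiableAt ℝ I u := fun u => (key u).differentiableAt
    have : I s - I 0 = 0 := by
      rcases eq_or_ne s 0 with h | h
      · simp [h]
      · have hc' := is_const_of_deriv_eq_zero (f := I)
          (fun u => (key u).differentiableAt) (fun u => (key u).deriv) s 0
        simp [hc']
    linarith
  exact hc t
end

section
/- Let b₀, b₁, b₂ : ℝ → ℝ be continuous and let Ā : ℝ → Matrix (Fin 2) (Fin 2) ℝ be differentiable with det Ā(t) = 1 for all t; write Ā(t) = [[ᾱ(t), β̄(t)], [γ̄(t), δ̄(t)]]. Let M(t) = [[b₁(t)/2, b₀(t)], [−b₂(t), −b₁(t)/2]] and let M'(t) = Ā(t) M(t) Ā(t)⁻¹ + Ā'(t) Ā(t)⁻¹ be its gauge transform. Then M'(t) = [[b'₁(t)/2, b'₀(t)], [−b'₂(t), −b'₁(t)/2]], where b'₂ = δ̄² b₂ − δ̄ γ̄ b₁ + γ̄² b₀ + γ̄ δ̄' − δ̄ γ̄', b'₁ = −2 β̄ δ̄ b₂ + (ᾱ δ̄ + β̄ γ̄) b₁ − 2 ᾱ γ̄ b₀ + δ̄ ᾱ' −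 ᾱ δ̄' + β̄ γ̄' − γ̄ β̄', and b'₀ = β̄² b₂ − ᾱ β̄ b₁ + ᾱ² b₀ + ᾱ β̄' − β̄ ᾱ'. In particular M'(t) is again traceless. -/
/-- If `Ā(t) = [[ᾱ, β̄], [γ̄, δ̄]]` is a differentiable curve with
`det Ā = 1` and `M(t) = [[b₁/2, b₀], [−b₂, −b₁/2]]`, then the gauge transform
`M' = Ā M Ā⁻¹ + Ā' Ā⁻¹` is again of the form `[[b'₁/2, b'₀], [−b'₂, −b'₁/2]]` (in
particular traceless) with
`b'₂ = δ̄²b₂ − δ̄γ̄b₁ + γ̄²b₀ + γ̄δ̄' − δ̄γ̄'`,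
`b'₁ = −2β̄δ̄b₂ + (ᾱδ̄ + β̄γ̄)b₁ − 2ᾱγ̄b₀ + δ̄ᾱ' − ᾱδ̄' + β̄γ̄' − γ̄β̄'`,
`b'₀ = β̄²b₂ − ᾱβ̄b₁ + ᾱ²b₀ + ᾱβ̄' − β̄ᾱ'`. -/
theorem gauge_transform_coefficient_formulas
    (b₀ b₁ b₂ : ℝ → ℝ) (hb₀ : Continuous b₀) (hb₁ : Continuous b₁) (hb₂ : Continuous b₂)
    (Abar Abar' : ℝ → Matrix (Fin 2) (Fin 2) ℝ)
    (hAder : ∀ t i j, HasDerivAt (fun s => Abar s i j) (Abar' t i j) t)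
    (hdet : ∀ t, (Abar t).det = 1)
    (M M' : ℝ → Matrix (Fin 2) (Fin 2) ℝ)
    (hM : ∀ t, M t = !![b₁ t / 2, b₀ t; -b₂ t, -b₁ t / 2])
    (hM' : ∀ t, M' t = Abar t * M t * (Abar t)⁻¹ + Abar' t * (Abar t)⁻¹)
    (b'₀ b'₁ b'₂ : ℝ → ℝ)
    (hb'₂ : ∀ t, b'₂ t = (Abar t 1 1) ^ 2 * b₂ t - Abar t 1 1 * Abar t 1 0 * b₁ t +
      (Abar t 1 0) ^ 2 * b₀ t + Abar t 1 0 * Abar' t 1 1 - Abar t 1 1 * Abar' t 1 0)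
    (hb'₁ : ∀ t, b'₁ t = -2 * Abar t 0 1 * Abar t 1 1 * b₂ t +
      (Abar t 0 0 * Abar t 1 1 + Abar t 0 1 * Abar t 1 0) * b₁ t -
      2 * Abar t 0 0 * Abar t 1 0 * b₀ t + Abar t 1 1 * Abar' t 0 0 -
      Abar t 0 0 * Abar' t 1 1 + Abar t 0 1 * Abar' t 1 0 - Abar t 1 0 * Abar' t 0 1)
    (hb'₀ : ∀ t, b'₀ t = (Abar t 0 1) ^ 2 * b₂ t - Abar t 0 0 * Abar t 0 1 * b₁ t +
      (Abar t 0 0) ^ 2 * b₀ t + Abar t 0 0 * Abar' t 0 1 - Abar t 0 1 * Abar' t 0 0) :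
    ∀ t, M' t = !![b'₁ t / 2, b'₀ t; -b'₂ t, -b'₁ t / 2] ∧ (M' t).trace = 0 := by

  intro t
  set a := Abar t 0 0
  set b := Abar t 0 1
  set c := Abar t 1 0
  set d := Abar t 1 1
  set a' := Abar' t 0 0
  set b' := Abar' t 0 1
  set c' := Abar' t 1 0
  set d' := Abar' t 1 1
  have hdet2 : a * d - b * c = 1 := by
    have := hdet t
    rwa [Matrix.det_fin_two] at this
  -- derivative of determinant is zero
  have hdd : HasDerivAt (fun s => Abar s 0 0 * Abar s 1 1 - Abar s 0 1 * Abar s 1 0)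
      (a' * d + a * d' - (b' * c + b * c')) t :=
    ((hAder t 0 0).mul (hAder t 1 1)).sub ((hAder t 0 1).mul (hAder t 1 0))
  have heq : (fun s => Abar s 0 0 * Abar s 1 1 - Abar s 0 1 * Abar s 1 0) = fun _ : ℝ => (1:ℝ) := by
    funext s
    have := hdet s
    rwa [Matrix.det_fin_two] at this
  have hzero : a' * d + a * d' - (b' * c + b * c') = 0 := by
    have h1 : HasDerivAt (fun _ : ℝ => (1:ℝ)) (a' * d + a * d' - (b' * c + b * c')) t := by
      rw [← heq]; exact hdd
    exact (h1.unique (hasDerivAt_const t 1))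
  have hinv : (Abar t)⁻¹ = !![d, -b; -c, a] := by
    apply Matrix.inv_eq_right_inv
    have hA : Abar t = !![a, b; c, d] := by
      ext i j; fin_cases i <;> fin_cases j <;> simp [a, b, c, d]
    rw [hA]
    ext i j
    fin_cases i <;> fin_cases j <;>
      simp [Matrix.mul_apply, Fin.sum_univ_two] <;> linarith [hdet2]
  have hA : Abar t = !![a, b; c, d] := by
    ext i j; fin_cases i <;> fin_cases j <;> simp [a, b, c, d]
  have hA' : Abar' t = !![a', b'; c', d'] := by
    ext i j; fin_cases i <;> fin_cases j <;> simp [a', b', c', d']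
  have hmain : M' t = !![b'₁ t / 2, b'₀ t; -b'₂ t, -b'₁ t / 2] := by
    rw [hM' t, hM t, hinv, hA, hA']
    ext i j
    fin_cases i <;> fin_cases j <;>
      simp [Matrix.mul_apply, Fin.sum_univ_two, hb'₀ t, hb'₁ t, hb'₂ t] <;>
      ring_nf <;> nlinarith [hdet2, hzero]
  refine ⟨hmain, ?_⟩
  rw [hmain, Matrix.trace_fin_two]
  simp
  ring
end
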